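/- Let Ω be a compact Hausdorff space and X a Banach space. Suppose Λ ∈ C(Ω, X)*_1 is a w*-w point of continuity that can be written as Λ = ∑_{i=1}^∞ α_i (δ_{ω_i} ⊗ x_i*) with α_i ∈ (0,1], ∑ α_i = 1, ‖x_i*‖ = 1, and the ω_i distinct. Then each ω_i is an isolated point of Ω. -/

import Mathlib

/-!
Suppose `ω i` is not isolated and move the `i`-th atom: for `t ≠ ω i` put
`μ t = Λ + α i • (δ_t ⊗ x i - δ_{ω i} ⊗ x i)`. Each `μ t` is again a convex combination of
norm-one point evaluations, so it lies in the unit ball, and `μ t → Λ` weak* as `t → ω i`.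
On the other hand a weak* cluster point `Ψ` in the bidual of the bumps `g • v` (with `g` equal to
`1` at `ω i` and vanishing on ever larger finite sets) plays the role of `v ⊗ χ_{ω i}`:
`Ψ (δ_t ⊗ y) = y v` if `t = ω i` and `0` otherwise. Hence `Ψ (μ t) = Ψ Λ - α i * x i v` for all
`t ≠ ω i`, which contradicts weak convergence as soon as `x i v ≠ 0`.
-/

open NormedSpace Filter Topology

variable {Ω : Type*} [TopologicalSpace Ω] [CompactSpace Ω]
variable {X : Type*} [NormedAddCommGroup X] [NormedSpace ℝ X]

/-- The functional `δ_ω ⊗ x* : f ↦ x*(f ω)` on `C(Ω, X)`. -/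
noncomputable def deltaTensor (ω : Ω) (x : StrongDual ℝ X) : StrongDual ℝ C(Ω, X) :=
  LinearMap.mkContinuous
    { toFun := fun f : C(Ω, X) => x (f ω)
      map_add' := fun f g => by simp
      map_smul' := fun c f => by simp }
    ‖x‖ (fun f => by
      calc ‖x (f ω)‖ ≤ ‖x‖ * ‖f ω‖ := x.le_opNorm _
        _ ≤ ‖x‖ * ‖f‖ :=
          mul_le_mul_of_nonneg_left (f.norm_coe_le_norm ω) (norm_nonneg x))

/-- `x*` in the dual unit ball is a *w\*-w point of continuity*: every net (filter) in the
dual unit ball converging weak\* to `x*` converges weakly to `x*`. -/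
def IsWStarWPC {E : Type*} [NormedAddCommGroup E] [NormedSpace ℝ E]
    (x : StrongDual ℝ E) : Prop :=
  ∀ l : Filter (StrongDual ℝ E), l.NeBot → (∀ᶠ φ in l, ‖φ‖ ≤ 1) →
    (∀ v : E, Tendsto (fun φ : StrongDual ℝ E => φ v) l (𝓝 (x v))) →
    ∀ Λ : StrongDual ℝ (StrongDual ℝ E), Tendsto (fun φ : StrongDual ℝ E => Λ φ) l (𝓝 (Λ x))

theorem StrongDual.exists_tendsto_apply_of_norm_le {F ι : Type*} [NormedAddCommGroup F]
    [NormedSpace ℝ F] (𝒰 : Ultrafilter ι) (φ : ι → StrongDual ℝ F) {r : ℝ}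
    (hφ : ∀ j, ‖φ j‖ ≤ r) :
    ∃ Ψ : StrongDual ℝ F, ∀ v, Tendsto (fun j => φ j v) 𝒰 (𝓝 (Ψ v)) := by
  obtain ⟨Ψ, -, hΨ⟩ := (WeakDual.isCompact_closedBall (0 : StrongDual ℝ F) r).ultrafilter_le_nhds
    (𝒰.map (StrongDual.toWeakDual ∘ φ))
    (le_principal_iff.2 (Filter.mem_map.2 (univ_mem' fun j => by simpa using hφ j)))
  exact ⟨WeakDual.toStrongDual Ψ, fun v => ((WeakDual.eval_continuous v).tendsto Ψ).comp hΨ⟩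

theorem exists_continuous_eqOn_zero_of_isClosed {Y : Type*} [TopologicalSpace Y]
    [CompletelyRegularSpace Y] {K : Set Y} (hK : IsClosed K) {y : Y} (hy : y ∉ K) :
    ∃ g : C(Y, ℝ), g y = 1 ∧ Set.EqOn g 0 K ∧ ∀ z, g z ∈ Set.Icc (0 : ℝ) 1 := by
  obtain ⟨f, hf, hfy, hfK⟩ := CompletelyRegularSpace.completely_regular y K hK hy
  refine ⟨⟨fun z => 1 - f z, by fun_prop⟩, by simp [hfy], fun z hz => by simp [hfK hz], fun z => ?_⟩
  simp [unitInterval.nonneg, unitInterval.le_one]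

theorem deltaTensor_apply (t : Ω) (y : StrongDual ℝ X) (f : C(Ω, X)) :
    deltaTensor t y f = y (f t) := rfl

open Classical in
theorem exists_bidual_deltaTensor_eq_ite [T35Space Ω] (ω₀ : Ω) (v : X) :
    ∃ Ψ : StrongDual ℝ (StrongDual ℝ C(Ω, X)),
      ∀ t y, Ψ (deltaTensor t y) = if t = ω₀ then y v else 0 := by
  have hg : ∀ S : Finset Ω, ∃ g : C(Ω, ℝ), g ω₀ = 1 ∧ Set.EqOn g 0 (↑S \ {ω₀}) ∧
      ∀ z, g z ∈ Set.Icc (0 : ℝ) 1 := fun S =>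
    exists_continuous_eqOn_zero_of_isClosed S.finite_toSet.sdiff.isClosed fun h => h.2 rfl
  choose g hg_one hg_zero hg_mem using hg
  let bump : Finset Ω → C(Ω, X) := fun S => ⟨fun z => g S z • v, by fun_prop⟩
  have hbump : ∀ S, ‖inclusionInDoubleDual ℝ _ (bump S)‖ ≤ ‖v‖ := fun S =>
    (double_dual_bound ℝ _ _).trans <| (ContinuousMap.norm_le _ (norm_nonneg v)).2 fun z => by
      simpa [bump, norm_smul, abs_of_nonneg (hg_mem S z).1] using
        mul_le_of_le_one_left (norm_nonneg v) (hg_mem S z).2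
  obtain ⟨Ψ, hΨ⟩ := StrongDual.exists_tendsto_apply_of_norm_le (.of atTop) _ hbump
  refine ⟨Ψ, fun t y => tendsto_nhds_unique (hΨ _) ?_⟩
  split_ifs with ht
  · subst ht
    simp [deltaTensor_apply, bump, hg_one]
  · refine tendsto_const_nhds.congr' ?_
    filter_upwards [Ultrafilter.of_le atTop (eventually_ge_atTop {t})] with S hS
    simp [deltaTensor_apply, bump, hg_zero S ⟨Finset.singleton_subset_iff.1 hS, ht⟩]

theorem tendsto_add_smul_deltaTensor_sub_apply (Λ : StrongDual ℝ C(Ω, X)) (c : ℝ)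
    (y : StrongDual ℝ X) (ω₀ : Ω) (f : C(Ω, X)) :
    Tendsto (fun t => (Λ + c • (deltaTensor t y - deltaTensor ω₀ y) : StrongDual ℝ C(Ω, X)) f)
      (𝓝 ω₀) (𝓝 (Λ f)) := by
  have hcont : Continuous fun t =>
      (Λ + c • (deltaTensor t y - deltaTensor ω₀ y) : StrongDual ℝ C(Ω, X)) f := by
    simp only [add_apply, smul_apply, sub_apply, deltaTensor_apply]
    fun_prop
  simpa [deltaTensor_apply] using hcont.tendsto ω₀

section WeightedSum

variable {ι : Type*} {α : ι → ℝ} {x : ι → StrongDual ℝ X}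

theorem norm_mul_apply_le {a : ℝ} (ha : 0 ≤ a) {y : StrongDual ℝ X} (hy : ‖y‖ ≤ 1)
    (f : C(Ω, X)) (z : Ω) : ‖a * y (f z)‖ ≤ a * ‖f‖ := by
  rw [norm_mul, Real.norm_of_nonneg ha]
  gcongr
  exact (y.le_of_opNorm_le hy _).trans (by simpa using f.norm_coe_le_norm z)

theorem summable_mul_apply (hα : ∀ j, 0 ≤ α j) (hsum : Summable α) (hx : ∀ j, ‖x j‖ ≤ 1)
    (p : ι → Ω) (f : C(Ω, X)) : Summable fun j => α j * x j (f (p j)) :=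
  .of_norm_bounded (hsum.mul_right ‖f‖) fun j => norm_mul_apply_le (hα j) (hx j) f (p j)

theorem norm_le_one_of_apply_eq_tsum (hα : ∀ j, 0 ≤ α j) (hsum : Summable α)
    (hle : ∑' j, α j ≤ 1) (hx : ∀ j, ‖x j‖ ≤ 1) (p : ι → Ω) (φ : StrongDual ℝ C(Ω, X))
    (hφ : ∀ f, φ f = ∑' j, α j * x j (f (p j))) : ‖φ‖ ≤ 1 :=
  φ.opNorm_le_bound zero_le_one fun f => by
    rw [hφ, one_mul]
    exact (tsum_of_norm_bounded (hsum.hasSum.mul_right ‖f‖) fun j =>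
      norm_mul_apply_le (hα j) (hx j) f (p j)).trans (mul_le_of_le_one_left (norm_nonneg f) hle)

theorem tsum_mul_apply_update [DecidableEq ι] (hα : ∀ j, 0 ≤ α j) (hsum : Summable α)
    (hx : ∀ j, ‖x j‖ ≤ 1) (p : ι → Ω) (i : ι) (t : Ω) (f : C(Ω, X)) :
    ∑' j, α j * x j (f (Function.update p i t j)) =
      ∑' j, α j * x j (f (p j)) + α i * (x i (f t) - x i (f (p i))) := by
  rw [(summable_mul_apply hα hsum hx _ f).tsum_eq_add_tsum_ite i,
    (summable_mul_apply hα hsum hx p f).tsum_eq_add_tsum_ite i]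
  have hrest : (fun j => if j = i then 0 else α j * x j (f (Function.update p i t j))) =
      fun j => if j = i then 0 else α j * x j (f (p j)) :=
    funext fun j => by split_ifs with h <;> simp [h]
  rw [hrest, Function.update_self]
  ring

theorem add_smul_deltaTensor_sub_apply_eq_tsum [DecidableEq ι] (hα : ∀ j, 0 ≤ α j)
    (hsum : Summable α) (hx : ∀ j, ‖x j‖ ≤ 1) (p : ι → Ω) {Λ : StrongDual ℝ C(Ω, X)}
    (hΛ : ∀ f, Λ f = ∑' j, α j * x j (f (p j))) (i : ι) (t : Ω) (f : C(Ω, X)) :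
    (Λ + α i • (deltaTensor t (x i) - deltaTensor (p i) (x i))) f =
      ∑' j, α j * x j (f (Function.update p i t j)) := by
  simp [tsum_mul_apply_update hα hsum hx, hΛ, deltaTensor_apply]

end WeightedSum

theorem isolated_of_isWStarWPC_sum_general [T2Space Ω]
    (Λ : StrongDual ℝ C(Ω, X)) (hpc : IsWStarWPC Λ)
    (α : ℕ → ℝ) (hα : ∀ i, α i ∈ Set.Ioc (0 : ℝ) 1) (hαsum : HasSum α 1)
    (ω : ℕ → Ω)
    (x : ℕ → StrongDual ℝ X) (hx : ∀ i, ‖x i‖ = 1)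
    (hrep : ∀ f : C(Ω, X), Λ f = ∑' i, α i * (deltaTensor (ω i) (x i)) f) :
    ∀ i, IsOpen ({ω i} : Set Ω) := by
  intro i
  by_contra hiso
  have : (𝓝[≠] (ω i)).NeBot := ⟨mt (isOpen_singleton_iff_punctured_nhds _).2 hiso⟩
  obtain ⟨v, hv⟩ : ∃ v, x i v ≠ 0 := DFunLike.ne_iff.1 (norm_ne_zero_iff.1 (by simp [hx i]))
  obtain ⟨Ψ, hΨ⟩ := exists_bidual_deltaTensor_eq_ite (ω i) v
  set μ : Ω → StrongDual ℝ C(Ω, X) :=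
    fun t => Λ + α i • (deltaTensor t (x i) - deltaTensor (ω i) (x i))
  have hα₀ : ∀ j, 0 ≤ α j := fun j => (hα j).1.le
  have hx₁ : ∀ j, ‖x j‖ ≤ 1 := fun j => (hx j).le
  have hball : ∀ t, ‖μ t‖ ≤ 1 := fun t =>
    norm_le_one_of_apply_eq_tsum hα₀ hαsum.summable hαsum.tsum_eq.le hx₁ _ _
      (add_smul_deltaTensor_sub_apply_eq_tsum hα₀ hαsum.summable hx₁ ω hrep i t)
  have hweak : ∀ f, Tendsto (fun t => μ t f) (𝓝[≠] (ω i)) (𝓝 (Λ f)) := fun f =>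
    (tendsto_add_smul_deltaTensor_sub_apply Λ (α i) (x i) (ω i) f).mono_left nhdsWithin_le_nhds
  have hΨμ : ∀ t ≠ ω i, Ψ (μ t) = Ψ Λ - α i * x i v := fun t ht => by
    simp [μ, hΨ, ht, sub_eq_add_neg]
  have hlim := tendsto_map'_iff.1 <| hpc (map μ (𝓝[≠] (ω i))) inferInstance
    (eventually_map.2 (.of_forall hball)) (fun f => tendsto_map'_iff.2 (hweak f)) Ψ
  have hjump : Ψ Λ = Ψ Λ - α i * x i v := tendsto_nhds_unique hlim
    (tendsto_const_nhds.congr' ((eventually_nhdsWithin_of_forall hΨμ).mono fun _ h => h.symm))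
  exact mul_ne_zero (hα i).1.ne' hv (by linarith)

/-- **Supports of w\*-w PCs consist of isolated points.**  If `Λ` in the dual unit ball of
`C(Ω, X)` is a w\*-w point of continuity and
`Λ = ∑_{i} α_i (δ_{ω_i} ⊗ x_i*)` with `α_i ∈ (0, 1]`, `∑ α_i = 1`, `‖x_i*‖ = 1` and the
`ω_i` distinct, then every `ω_i` is an isolated point of `Ω`. -/
theorem isolated_of_isWStarWPC_sum [T2Space Ω] [CompleteSpace X]
    (Λ : StrongDual ℝ C(Ω, X)) (hΛball : ‖Λ‖ ≤ 1) (hpc : IsWStarWPC Λ)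
    (α : ℕ → ℝ) (hα : ∀ i, α i ∈ Set.Ioc (0 : ℝ) 1) (hαsum : HasSum α 1)
    (ω : ℕ → Ω) (hω : Function.Injective ω)
    (x : ℕ → StrongDual ℝ X) (hx : ∀ i, ‖x i‖ = 1)
    (hrep : ∀ f : C(Ω, X), Λ f = ∑' i, α i * (deltaTensor (ω i) (x i)) f) :
    ∀ i, IsOpen ({ω i} : Set Ω) :=
  isolated_of_isWStarWPC_sum_general Λ hpc α hα hαsum ω x hx hrep
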